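/- Let $N \geq 2$, let $a_1,\dots,a_N$ be real constants, and let $x_1,\dots,x_N : J \to \mathbb{R}$ be differentiable functions on an open interval $J$ satisfying the ordered mCH $N$-peakon system. Then the function $I_N(t) = \sum_{1 \le i < j \le N} \big( 3 a_i a_j e^{-(x_i(t)-x_j(t))} + (-1)^{i+j}(a_j^2 x_i(t) - a_i^2 x_j(t)) \big)$ is constant on $J$ (its derivative vanishes identically on $J$). -/

import Mathlib

/-!
Write `E i j = aᵢ aⱼ e^{-(xᵢ - xⱼ)}` and `Y k` for the sum of `E i j` over the pairs `i < k ≤ j`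
straddling the gap before `k`, so that `Y 1 = Y (N + 1) = 0`. On an ordered configuration the
velocity of the `k`-th peakon is `vₖ = (2/3) aₖ² + 2 (Y k + Y (k + 1))`, and
`∑_{i<j} E i j (vⱼ - vᵢ) = ∑ₖ vₖ (Y k - Y (k + 1))`. So the exponential part of `dI/dt` is
`2 ∑ₖ aₖ² (Y k - Y (k + 1))` plus `6 ∑ₖ ((Y k)² - (Y (k + 1))²)`, which telescopes to `0`.
The alternating part is `∑ₖ cₖ vₖ` for signed weights with `cₖ + cₖ₊₁ = aₖ² - aₖ₊₁²`: its
`aₖ²`-part vanishes by antisymmetry, and summation by parts shows that its `Y`-part cancels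
`2 ∑ₖ aₖ² (Y k - Y (k + 1))`.
-/

open Finset

theorem Set.OrdConnected.eq_of_hasDerivAt_zero {G : Type*} [NormedAddCommGroup G]
    [NormedSpace ℝ G] {f : ℝ → G} {s : Set ℝ} (hs : s.OrdConnected)
    (hf : ∀ t ∈ s, HasDerivAt f 0 t) {t t' : ℝ} (ht : t ∈ s) (ht' : t' ∈ s) : f t = f t' := by
  have := (convex_iff_ordConnected.2 hs).norm_image_sub_le_of_norm_hasDerivWithin_le
    (fun u hu => (hf u hu).hasDerivWithinAt) (fun _ _ => norm_zero.le) ht' ht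
  rw [zero_mul, norm_le_zero_iff, sub_eq_zero] at this
  exact this

namespace MCHPeakon

section Intervals

variable (N : ℕ)

theorem Icc_one_filter_lt_eq_Ioc (i : ℕ) : (Icc 1 N).filter (fun j => i < j) = Ioc i N := by
  ext j
  simp only [mem_filter, mem_Icc, mem_Ioc]
  omega

theorem Icc_one_filter_gt_eq_Ico {i : ℕ} (hi : i ≤ N + 1) :
    (Icc 1 N).filter (fun j => j < i) = Ico 1 i := by
  ext j
  simp only [mem_filter, mem_Icc, mem_Ico]
  omega

theorem Icc_one_erase_eq_Ico_union_Ioc {i : ℕ} (hi : i ∈ Icc 1 N) :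
    (Icc 1 N).erase i = Ico 1 i ∪ Ioc i N := by
  ext j
  simp only [mem_erase, mem_union, mem_Icc, mem_Ico, mem_Ioc] at hi ⊢
  omega

theorem sum_Icc_Ioc_comm {M : Type*} [AddCommMonoid M] (F : ℕ → ℕ → M) :
    ∑ i ∈ Icc 1 N, ∑ j ∈ Ioc i N, F i j = ∑ j ∈ Icc 1 N, ∑ i ∈ Ico 1 j, F i j :=
  sum_comm' fun i j => by simp only [mem_Icc, mem_Ioc, mem_Ico]; omega

theorem sum_Icc_one_sub_add_one {M : Type*} [AddCommGroup M] (f : ℕ → M) :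
    ∑ k ∈ Icc 1 N, (f k - f (k + 1)) = f 1 - f (N + 1) := by
  rw [← Ico_add_one_right_eq_Icc, ← neg_sub, ← sum_Ico_sub f (by omega), ← sum_neg_distrib]
  simp only [neg_sub]

end Intervals

section CutSum

variable (N : ℕ) (E : ℕ → ℕ → ℝ)

def cutSum (k : ℕ) : ℝ := ∑ i ∈ Ico 1 k, ∑ j ∈ Icc k N, E i j

theorem cutSum_one : cutSum N E 1 = 0 := by simp [cutSum]

theorem cutSum_add_one_self : cutSum N E (N + 1) = 0 := by simp [cutSum]

theorem cutSum_eq_add {k : ℕ} (hk : k ≤ N) :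
    cutSum N E k = ∑ i ∈ Ico 1 k, E i k + ∑ i ∈ Ico 1 k, ∑ j ∈ Ioc k N, E i j := by
  rw [cutSum, ← sum_add_distrib]
  refine sum_congr rfl fun i _ => ?_
  rw [← Ioc_insert_left hk, sum_insert left_notMem_Ioc]

theorem cutSum_add_one_eq_add {k : ℕ} (hk : 1 ≤ k) :
    cutSum N E (k + 1) = ∑ j ∈ Ioc k N, E k j + ∑ i ∈ Ico 1 k, ∑ j ∈ Ioc k N, E i j := by
  rw [cutSum, Icc_add_one_left_eq_Ioc, sum_Ico_succ_top hk, add_comm]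

theorem sum_pairs_mul_sub (g : ℕ → ℝ) :
    ∑ i ∈ Icc 1 N, ∑ j ∈ Ioc i N, E i j * (g j - g i)
      = ∑ k ∈ Icc 1 N, g k * (cutSum N E k - cutSum N E (k + 1)) := by
  have hleft : ∑ i ∈ Icc 1 N, ∑ j ∈ Ioc i N, E i j * g j
      = ∑ k ∈ Icc 1 N, g k * ∑ i ∈ Ico 1 k, E i k := by
    rw [sum_Icc_Ioc_comm]
    simp only [mul_sum, mul_comm]
  have hright : ∑ i ∈ Icc 1 N, ∑ j ∈ Ioc i N, E i j * g i
      = ∑ k ∈ Icc 1 N, g k * ∑ j ∈ Ioc k N, E k j := by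
    simp only [mul_sum, mul_comm]
  calc ∑ i ∈ Icc 1 N, ∑ j ∈ Ioc i N, E i j * (g j - g i)
      = ∑ i ∈ Icc 1 N, ∑ j ∈ Ioc i N, E i j * g j - ∑ i ∈ Icc 1 N, ∑ j ∈ Ioc i N, E i j * g i := by
        simp only [mul_sub, sum_sub_distrib]
    _ = ∑ k ∈ Icc 1 N, (g k * ∑ i ∈ Ico 1 k, E i k - g k * ∑ j ∈ Ioc k N, E k j) := by
        rw [hleft, hright, sum_sub_distrib]
    _ = ∑ k ∈ Icc 1 N, g k * (cutSum N E k - cutSum N E (k + 1)) := by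
        refine sum_congr rfl fun k hk => ?_
        rw [cutSum_eq_add N E (mem_Icc.mp hk).2, cutSum_add_one_eq_add N E (mem_Icc.mp hk).1]
        ring

end CutSum

section AltWeight

variable (N : ℕ) (w : ℕ → ℝ)

def altWeight (k : ℕ) : ℝ :=
  ∑ j ∈ Ioc k N, (-1) ^ (k + j) * w j - ∑ i ∈ Ico 1 k, (-1) ^ (i + k) * w i

theorem sum_pairs_neg_one_pow_mul (g : ℕ → ℝ) :
    ∑ i ∈ Icc 1 N, ∑ j ∈ Ioc i N, (-1) ^ (i + j) * (w j * g i - w i * g j)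
      = ∑ k ∈ Icc 1 N, altWeight N w k * g k := by
  have hleft : ∑ i ∈ Icc 1 N, ∑ j ∈ Ioc i N, (-1) ^ (i + j) * w j * g i
      = ∑ k ∈ Icc 1 N, (∑ j ∈ Ioc k N, (-1) ^ (k + j) * w j) * g k := by
    simp only [sum_mul]
  have hright : ∑ i ∈ Icc 1 N, ∑ j ∈ Ioc i N, (-1) ^ (i + j) * w i * g j
      = ∑ k ∈ Icc 1 N, (∑ i ∈ Ico 1 k, (-1) ^ (i + k) * w i) * g k := by
    rw [sum_Icc_Ioc_comm]
    simp only [sum_mul]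
  calc ∑ i ∈ Icc 1 N, ∑ j ∈ Ioc i N, (-1) ^ (i + j) * (w j * g i - w i * g j)
      = ∑ i ∈ Icc 1 N, ∑ j ∈ Ioc i N, (-1) ^ (i + j) * w j * g i
          - ∑ i ∈ Icc 1 N, ∑ j ∈ Ioc i N, (-1) ^ (i + j) * w i * g j := by
        simp only [← sum_sub_distrib]
        exact sum_congr rfl fun i _ => sum_congr rfl fun j _ => by ring
    _ = ∑ k ∈ Icc 1 N, altWeight N w k * g k := by
        rw [hleft, hright, ← sum_sub_distrib]
        exact sum_congr rfl fun k _ => by rw [altWeight, sub_mul]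

theorem sum_altWeight_mul_self : ∑ k ∈ Icc 1 N, altWeight N w k * w k = 0 := by
  rw [← sum_pairs_neg_one_pow_mul]
  simp [mul_comm]

theorem altWeight_add_altWeight_add_one {k : ℕ} (hk₁ : 1 ≤ k) (hkN : k < N) :
    altWeight N w k + altWeight N w (k + 1) = w k - w (k + 1) := by
  have hodd : (-1 : ℝ) ^ (k + (k + 1)) = -1 := Odd.neg_one_pow ⟨k, by ring⟩
  have hflip_right : ∑ j ∈ Ioc (k + 1) N, (-1 : ℝ) ^ (k + 1 + j) * w j
      = -∑ j ∈ Ioc (k + 1) N, (-1) ^ (k + j) * w j := by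
    rw [← sum_neg_distrib]
    exact sum_congr rfl fun j _ => by rw [add_right_comm, pow_succ]; ring
  have hflip_left : ∑ i ∈ Ico 1 k, (-1 : ℝ) ^ (i + (k + 1)) * w i
      = -∑ i ∈ Ico 1 k, (-1) ^ (i + k) * w i := by
    rw [← sum_neg_distrib]
    exact sum_congr rfl fun i _ => by rw [← add_assoc, pow_succ]; ring
  rw [altWeight, altWeight, ← Icc_add_one_left_eq_Ioc, ← Ioc_insert_left hkN,
    sum_insert left_notMem_Ioc, sum_Ico_succ_top hk₁, hflip_right, hflip_left, hodd]
  ring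

theorem sum_mul_sub_add_altWeight_mul_add_eq_zero {Y : ℕ → ℝ} (hY₁ : Y 1 = 0)
    (hYN : Y (N + 1) = 0) :
    ∑ k ∈ Icc 1 N, (w k * (Y k - Y (k + 1)) + altWeight N w k * (Y k + Y (k + 1))) = 0 := by
  set h : ℕ → ℝ := fun k => Y k * (w k + altWeight N w k) with hh
  calc ∑ k ∈ Icc 1 N, (w k * (Y k - Y (k + 1)) + altWeight N w k * (Y k + Y (k + 1)))
      = ∑ k ∈ Icc 1 N, (h k - h (k + 1)) := by
        refine sum_congr rfl fun k hk => ?_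
        obtain ⟨hk₁, hkN⟩ := mem_Icc.mp hk
        rcases hkN.lt_or_eq with hlt | rfl
        · have := altWeight_add_altWeight_add_one N w hk₁ hlt
          simp only [hh]
          linear_combination (Y (k + 1)) * this
        · simp only [hh, hYN]
          ring
    _ = 0 := by rw [sum_Icc_one_sub_add_one, hh]; simp [hY₁, hYN]

end AltWeight

variable (N : ℕ) (E : ℕ → ℕ → ℝ) (w : ℕ → ℝ)

noncomputable def velocity (k : ℕ) : ℝ := 2 / 3 * w k + 2 * (cutSum N E k + cutSum N E (k + 1))

theorem sum_pairs_velocity_eq_zero :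
    ∑ i ∈ Icc 1 N, ∑ j ∈ Ioc i N,
        (3 * E i j * (velocity N E w j - velocity N E w i)
          + (-1) ^ (i + j) * (w j * velocity N E w i - w i * velocity N E w j)) = 0 := by
  set Y := cutSum N E
  set d := velocity N E w
  calc ∑ i ∈ Icc 1 N, ∑ j ∈ Ioc i N,
        (3 * E i j * (d j - d i) + (-1) ^ (i + j) * (w j * d i - w i * d j))
      = 3 * ∑ i ∈ Icc 1 N, ∑ j ∈ Ioc i N, E i j * (d j - d i)
          + ∑ i ∈ Icc 1 N, ∑ j ∈ Ioc i N, (-1) ^ (i + j) * (w j * d i - w i * d j) := by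
        simp only [mul_sum, ← sum_add_distrib]
        exact sum_congr rfl fun i _ => sum_congr rfl fun j _ => by ring
    _ = 3 * ∑ k ∈ Icc 1 N, d k * (Y k - Y (k + 1)) + ∑ k ∈ Icc 1 N, altWeight N w k * d k := by
        rw [sum_pairs_mul_sub, sum_pairs_neg_one_pow_mul]
    _ = 2 * ∑ k ∈ Icc 1 N, (w k * (Y k - Y (k + 1)) + altWeight N w k * (Y k + Y (k + 1)))
          + 2 / 3 * ∑ k ∈ Icc 1 N, altWeight N w k * w k
          + 6 * ∑ k ∈ Icc 1 N, (Y k ^ 2 - Y (k + 1) ^ 2) := by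
        simp only [mul_sum, ← sum_add_distrib]
        exact sum_congr rfl fun k _ => by simp only [d, velocity]; ring
    _ = 0 := by
        rw [sum_mul_sub_add_altWeight_mul_add_eq_zero N w (cutSum_one N E)
          (cutSum_add_one_self N E), sum_altWeight_mul_self,
          sum_Icc_one_sub_add_one N (Y · ^ 2)]
        simp [Y, cutSum_one, cutSum_add_one_self]

theorem peakon_rhs_eq_velocity {a y : ℕ → ℝ}
    (horder : ∀ i ∈ Icc 1 N, ∀ j ∈ Icc 1 N, i < j → y j < y i) {i : ℕ} (hi : i ∈ Icc 1 N) :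
    2 / 3 * a i ^ 2
        + 2 * a i * ∑ j ∈ (Icc 1 N).erase i, a j * Real.exp (-|y i - y j|)
        + 4 * ∑ j ∈ (Icc 1 N).filter (fun j => j < i), ∑ k ∈ (Icc 1 N).filter (fun k => i < k),
            a j * a k * Real.exp (-(y j - y k))
      = velocity N (fun j k => a j * a k * Real.exp (-(y j - y k))) (fun k => a k ^ 2) i := by
  obtain ⟨hi₁, hiN⟩ := mem_Icc.mp hi
  have hleft : 2 * a i * ∑ j ∈ Ico 1 i, a j * Real.exp (-|y i - y j|)
      = 2 * ∑ j ∈ Ico 1 i, a j * a i * Real.exp (-(y j - y i)) := by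
    simp only [mul_sum]
    refine sum_congr rfl fun j hj => ?_
    obtain ⟨hj₁, hji⟩ := mem_Ico.mp hj
    rw [abs_sub_comm, abs_of_pos (sub_pos.2 (horder j (mem_Icc.2 ⟨hj₁, by omega⟩) i hi hji))]
    ring
  have hright : 2 * a i * ∑ j ∈ Ioc i N, a j * Real.exp (-|y i - y j|)
      = 2 * ∑ j ∈ Ioc i N, a i * a j * Real.exp (-(y i - y j)) := by
    simp only [mul_sum]
    refine sum_congr rfl fun j hj => ?_
    obtain ⟨hij, hjN⟩ := mem_Ioc.mp hj
    rw [abs_of_pos (sub_pos.2 (horder i hi j (mem_Icc.2 ⟨by omega, hjN⟩) hij))]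
    ring
  have hdisj : Disjoint (Ico 1 i) (Ioc i N) :=
    disjoint_left.2 fun j hj hj' => by simp only [mem_Ico, mem_Ioc] at hj hj'; omega
  rw [Icc_one_erase_eq_Ico_union_Ioc N hi, sum_union hdisj, mul_add, hleft, hright,
    Icc_one_filter_gt_eq_Ico N (by omega), Icc_one_filter_lt_eq_Ioc, velocity,
    cutSum_eq_add N _ hiN, cutSum_add_one_eq_add N _ hi₁]
  ring

theorem hasDerivAt_peakon_invariant {a d : ℕ → ℝ} {x : ℕ → ℝ → ℝ} {t : ℝ}
    (hx : ∀ i ∈ Icc 1 N, HasDerivAt (x i) (d i) t) :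
    HasDerivAt (fun s => ∑ i ∈ Icc 1 N, ∑ j ∈ Ioc i N,
        (3 * a i * a j * Real.exp (-(x i s - x j s))
          + (-1) ^ (i + j) * (a j ^ 2 * x i s - a i ^ 2 * x j s)))
      (∑ i ∈ Icc 1 N, ∑ j ∈ Ioc i N,
        (3 * (a i * a j * Real.exp (-(x i t - x j t))) * (d j - d i)
          + (-1) ^ (i + j) * (a j ^ 2 * d i - a i ^ 2 * d j))) t := by
  refine HasDerivAt.fun_sum fun i hi => HasDerivAt.fun_sum fun j hj => ?_
  have hj' : j ∈ Icc 1 N := by grind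
  exact (((((hx i hi).fun_sub (hx j hj')).fun_neg.exp).const_mul (3 * a i * a j)).fun_add
    ((((hx i hi).const_mul (a j ^ 2)).fun_sub ((hx j hj').const_mul (a i ^ 2))).const_mul
      ((-1 : ℝ) ^ (i + j)))).congr_deriv (by ring)

end MCHPeakon

theorem mCH_ordered_peakon_IN_conserved
    (N : ℕ) (a : ℕ → ℝ) (x : ℕ → ℝ → ℝ) (J : Set ℝ)
    (hJconn : J.OrdConnected)
    (horder : ∀ t ∈ J, ∀ i ∈ Finset.Icc 1 N, ∀ j ∈ Finset.Icc 1 N, i < j →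
      x j t < x i t)
    (heom : ∀ t ∈ J, ∀ i ∈ Finset.Icc 1 N,
      HasDerivAt (x i)
        ((2/3) * a i ^ 2
          + 2 * a i * ∑ j ∈ (Finset.Icc 1 N).erase i,
              a j * Real.exp (-|x i t - x j t|)
          + 4 * ∑ j ∈ (Finset.Icc 1 N).filter (fun j => j < i),
              ∑ k ∈ (Finset.Icc 1 N).filter (fun k => i < k),
                a j * a k * Real.exp (-(x j t - x k t))) t) :
    (∀ t ∈ J,
      HasDerivAt (fun s =>
        ∑ i ∈ Finset.Icc 1 N, ∑ j ∈ (Finset.Icc 1 N).filter (fun j => i < j),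
          (3 * a i * a j * Real.exp (-(x i s - x j s))
            + (-1 : ℝ) ^ (i + j) * (a j ^ 2 * x i s - a i ^ 2 * x j s))) 0 t)
    ∧ (∀ t ∈ J, ∀ t' ∈ J,
      (∑ i ∈ Finset.Icc 1 N, ∑ j ∈ (Finset.Icc 1 N).filter (fun j => i < j),
          (3 * a i * a j * Real.exp (-(x i t - x j t))
            + (-1 : ℝ) ^ (i + j) * (a j ^ 2 * x i t - a i ^ 2 * x j t)))
      = ∑ i ∈ Finset.Icc 1 N, ∑ j ∈ (Finset.Icc 1 N).filter (fun j => i < j),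
          (3 * a i * a j * Real.exp (-(x i t' - x j t'))
            + (-1 : ℝ) ^ (i + j) * (a j ^ 2 * x i t' - a i ^ 2 * x j t'))) := by
  have hderiv : ∀ t ∈ J, HasDerivAt (fun s => ∑ i ∈ Icc 1 N, ∑ j ∈ Ioc i N,
      (3 * a i * a j * Real.exp (-(x i s - x j s))
        + (-1) ^ (i + j) * (a j ^ 2 * x i s - a i ^ 2 * x j s))) 0 t := by
    intro t ht
    have hx : ∀ i ∈ Icc 1 N, HasDerivAt (x i) (MCHPeakon.velocity N
        (fun j k => a j * a k * Real.exp (-(x j t - x k t))) (fun k => a k ^ 2) i) t :=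
      fun i hi => MCHPeakon.peakon_rhs_eq_velocity N (horder t ht) hi ▸ heom t ht i hi
    simpa only [MCHPeakon.sum_pairs_velocity_eq_zero] using
      MCHPeakon.hasDerivAt_peakon_invariant N (a := a) hx
  simp only [MCHPeakon.Icc_one_filter_lt_eq_Ioc]
  exact ⟨hderiv, fun t ht t' ht' => hJconn.eq_of_hasDerivAt_zero hderiv ht ht'⟩
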